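/- Let P be a strongly continuous contraction semigroup on a Hilbert space H. If there exists a bounded idempotent Π ∈ B(H) (Π² = Π) and a function r with lim_{t→∞} r(t) = 0 such that ‖P_t f − Π f‖ ≤ r(t)‖f − Π f‖ for all f ∈ H and all t large enough, then Π = P_∞, the orthogonal projection onto the P-invariant vectors; hence P converges to equilibrium with rate r(t). -/

import Mathlib

open MeasureTheory Filter

noncomputable section

/-- A strongly continuous contraction semigroup on a Hilbert space. -/
def IsContractionSemigroup {H : Type*} [NormedAddCommGroup H] [InnerProductSpace ℂ H]
    [CompleteSpace H] (P : ℝ → H →L[ℂ] H) : Prop :=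
  P 0 = 1 ∧ (∀ s t : ℝ, 0 ≤ s → 0 ≤ t → P (s + t) = (P s).comp (P t)) ∧
    (∀ t : ℝ, 0 ≤ t → ‖P t‖ ≤ 1) ∧
    ∀ f : H, Tendsto (fun t => P t f) (nhdsWithin 0 (Set.Ici 0)) (nhds f)

/-- The closed subspace of `P`-invariant vectors. -/
def invariantSubspace {H : Type*} [NormedAddCommGroup H] [InnerProductSpace ℂ H]
    [CompleteSpace H] (P : ℝ → H →L[ℂ] H) : Submodule ℂ H where
  carrier := {f | ∀ t : ℝ, 0 ≤ t → P t f = f}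
  add_mem' := by
    intro a b ha hb t ht
    rw [map_add, ha t ht, hb t ht]
  zero_mem' := by
    intro t ht
    simp
  smul_mem' := by
    intro c a ha t ht
    rw [_root_.map_smul, ha t ht]

lemma invariantSubspace_isClosed {H : Type*} [NormedAddCommGroup H] [InnerProductSpace ℂ H]
    [CompleteSpace H] (P : ℝ → H →L[ℂ] H) :
    IsClosed ((invariantSubspace P : Submodule ℂ H) : Set H) := by
  have h : ((invariantSubspace P : Submodule ℂ H) : Set H)
      = ⋂ (t : ℝ) (_ : 0 ≤ t), {f : H | P t f = f} := by
    ext f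
    simp only [Set.mem_iInter, Set.mem_setOf_eq]
    rfl
  rw [h]
  exact isClosed_iInter fun t => isClosed_iInter fun _ =>
    isClosed_eq (P t).continuous continuous_id

/-- `P_∞`, the orthogonal projection onto the closed subspace of `P`-invariant vectors. -/
def equilibriumProjection {H : Type*} [NormedAddCommGroup H] [InnerProductSpace ℂ H]
    [CompleteSpace H] (P : ℝ → H →L[ℂ] H) : H → H :=
  haveI : CompleteSpace (invariantSubspace P) :=
    (invariantSubspace_isClosed P).completeSpace_coe
  fun f => (Submodule.orthogonalProjection (invariantSubspace P) f : H)

/-- if a strongly continuous contraction semigroup `P` on a Hilbert space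
converges, at some rate `r(t) → 0` and for `t` large enough, to a bounded idempotent `Pr`,
then `Pr` is the orthogonal projection `P_∞` onto the `P`-invariant vectors; hence `P`
converges to equilibrium with rate `r(t)`. -/
theorem convergence_to_bounded_idempotent_eq_equilibrium_projection
    {H : Type*} [NormedAddCommGroup H] [InnerProductSpace ℂ H] [CompleteSpace H]
    (P : ℝ → H →L[ℂ] H) (hP : IsContractionSemigroup P)
    (Pr : H →L[ℂ] H) (hidem : Pr.comp Pr = Pr)
    (r : ℝ → ℝ) (hr : Tendsto r atTop (nhds 0))
    (hconv : ∃ T : ℝ, ∀ t ≥ T, ∀ f : H, ‖P t f - Pr f‖ ≤ r t * ‖f - Pr f‖) :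
    (∀ f : H, Pr f = equilibriumProjection P f) ∧
      ∃ T : ℝ, ∀ t ≥ T, ∀ f : H,
        ‖P t f - equilibriumProjection P f‖ ≤ r t * ‖f - equilibriumProjection P f‖ := by
  classical
  obtain ⟨hP0, hPadd, hPnorm, hPcont⟩ := hP
  obtain ⟨T, hT⟩ := hconv
  set M := invariantSubspace P with hM
  haveI : CompleteSpace M := (invariantSubspace_isClosed P).completeSpace_coe
  have hPP : ∀ x : H, Pr (Pr x) = Pr x := fun x => by
    rw [← ContinuousLinearMap.comp_apply, hidem]
  -- choose t₀ ≥ T, t₀ ≥ 0, with r t₀ < 1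
  obtain ⟨t₀, ht₀T, ht₀0, ht₀r⟩ : ∃ t₀, T ≤ t₀ ∧ (0:ℝ) ≤ t₀ ∧ r t₀ < 1 := by
    have h1 : ∀ᶠ t in atTop, r t < 1 := hr.eventually (eventually_lt_nhds one_pos)
    have h2 : ∀ᶠ t : ℝ in atTop, T ≤ t ∧ 0 ≤ t := (eventually_ge_atTop T).and (eventually_ge_atTop 0)
    obtain ⟨t₀, ⟨h2a, h2b⟩, h1a⟩ := (h2.and h1).exists
    exact ⟨t₀, h2a, h2b, h1a⟩
  -- Fact A : invariant vectors are fixed by Pr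
  have factA : ∀ g ∈ M, Pr g = g := by
    intro g hg
    have hfix : P t₀ g = g := hg t₀ ht₀0
    have h := hT t₀ ht₀T g
    rw [hfix] at h
    have h0 : ‖g - Pr g‖ = 0 := by nlinarith [norm_nonneg (g - Pr g)]
    exact (sub_eq_zero.mp (norm_eq_zero.mp h0)).symm
  -- Fact B : Pr f is invariant
  have hfixPr : ∀ t ≥ max T 0, ∀ f : H, P t (Pr f) = Pr f := by
    intro t ht f
    have h := hT t (le_trans (le_max_left T 0) ht) (Pr f)
    rw [hPP f] at h
    simp only [sub_self, norm_zero, mul_zero] at h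
    have h0 : ‖P t (Pr f) - Pr f‖ = 0 := le_antisymm h (norm_nonneg _)
    exact sub_eq_zero.mp (norm_eq_zero.mp h0)
  have factB : ∀ f : H, Pr f ∈ M := by
    intro f s hs
    have h1 : P (max T 0) (Pr f) = Pr f := hfixPr (max T 0) le_rfl f
    have h2 : P (s + max T 0) (Pr f) = Pr f :=
      hfixPr _ (le_add_of_nonneg_left hs) f
    calc P s (Pr f) = P s (P (max T 0) (Pr f)) := by rw [h1]
      _ = P (s + max T 0) (Pr f) := by
          rw [hPadd s (max T 0) hs (le_max_right T 0)]; rfl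
      _ = Pr f := h2
  -- Fact C : invariant vectors are fixed by the adjoints
  have factC : ∀ g ∈ M, ∀ t : ℝ, 0 ≤ t → ContinuousLinearMap.adjoint (P t) g = g := by
    intro g hg t ht
    set A := ContinuousLinearMap.adjoint (P t) with hA
    have hAnorm : ‖A‖ = ‖P t‖ := LinearIsometryEquiv.norm_map _ (P t)
    have hAg : ‖A g‖ ≤ ‖g‖ := by
      calc ‖A g‖ ≤ ‖A‖ * ‖g‖ := A.le_opNorm g
        _ ≤ 1 * ‖g‖ := by
            apply mul_le_mul_of_nonneg_right _ (norm_nonneg g)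
            rw [hAnorm]; exact hPnorm t ht
        _ = ‖g‖ := one_mul _
    have hsq : ‖A g - g‖ ^ 2 = ‖A g‖ ^ 2 - 2 * RCLike.re (inner ℂ (A g) g : ℂ) + ‖g‖ ^ 2 :=
      norm_sub_sq (𝕜 := ℂ) _ _
    have hre : (inner ℂ (A g) g : ℂ) = inner ℂ g g := by
      rw [hA, ContinuousLinearMap.adjoint_inner_left, hg t ht]
    have hre2 : RCLike.re (inner ℂ (A g) g : ℂ) = ‖g‖ ^ 2 := by
      rw [hre]; exact_mod_cast inner_self_eq_norm_sq (𝕜 := ℂ) g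
    have h0 : ‖A g - g‖ = 0 := by nlinarith [norm_nonneg (A g - g), norm_nonneg (A g), norm_nonneg g]
    exact sub_eq_zero.mp (norm_eq_zero.mp h0)
  -- Fact D : f - Pr f is orthogonal to M
  have factD : ∀ f : H, ∀ g ∈ M, (inner ℂ (f - Pr f) g : ℂ) = 0 := by
    intro f g hg
    have key : ∀ t ≥ max T 0, ‖(inner ℂ (f - Pr f) g : ℂ)‖ ≤ r t * (‖f - Pr f‖ * ‖g‖) := by
      intro t ht
      have h1 : (inner ℂ (P t f) g : ℂ) = inner ℂ f g := by
        rw [← ContinuousLinearMap.adjoint_inner_right,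
          factC g hg t (le_trans (le_max_right T 0) ht)]
      have h2 : (inner ℂ (f - Pr f) g : ℂ) = inner ℂ (P t f - Pr f) g := by
        rw [inner_sub_left, inner_sub_left, h1]
      rw [h2]
      calc ‖(inner ℂ (P t f - Pr f) g : ℂ)‖ ≤ ‖P t f - Pr f‖ * ‖g‖ := norm_inner_le_norm _ _
        _ ≤ (r t * ‖f - Pr f‖) * ‖g‖ :=
            mul_le_mul_of_nonneg_right (hT t (le_trans (le_max_left T 0) ht) f) (norm_nonneg g)
        _ = r t * (‖f - Pr f‖ * ‖g‖) := mul_assoc _ _ _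
    have hlim : Tendsto (fun t => r t * (‖f - Pr f‖ * ‖g‖)) atTop (nhds 0) := by
      simpa using hr.mul_const (‖f - Pr f‖ * ‖g‖)
    have hle : ‖(inner ℂ (f - Pr f) g : ℂ)‖ ≤ 0 :=
      ge_of_tendsto hlim (eventually_atTop.mpr ⟨max T 0, key⟩)
    exact norm_le_zero_iff.mp hle
  -- conclusion
  have main : ∀ f : H, Pr f = equilibriumProjection P f := by
    intro f
    have := Submodule.eq_starProjection_of_mem_of_inner_eq_zero (K := M) (u := f)
      (factB f) (fun w hw => factD f w hw)
    exact this.symm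
  refine ⟨main, T, fun t ht f => ?_⟩
  rw [← main f]
  exact hT t ht f
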